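/- The two-point suspension functor Σ : adCh → adCh_{ΣO[-1]/}, regarding ΣC as an object under ΣO[-1] via its two distinguished 0-chains ⊥ and ⊤, is fully faithful. -/

import Mathlib

open CategoryTheory

noncomputable section

/-- An augmented directed chain complex (Steiner): an ℕ-graded chain complex of abelian
groups with an augmentation `ε : C₀ → ℤ` satisfying `ε ∘ ∂₀ = 0`, together with a
positivity submonoid in each degree. -/
structure ADC where
  X : ℕ → Type
  inst : ∀ q, AddCommGroup (X q)
  d : ∀ q, X (q + 1) →+ X q
  dd : ∀ q (x : X (q + 2)), d q (d (q + 1) x) = 0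
  ε : X 0 →+ ℤ
  εd : ∀ x : X 1, ε (d 0 x) = 0
  pos : ∀ q, AddSubmonoid (X q)

attribute [instance] ADC.inst

namespace ADC

/-- A morphism of augmented directed chain complexes: a chain map preserving the
augmentation and the positivity submonoids. -/
structure Hom (C D : ADC) where
  f : ∀ q, C.X q →+ D.X q
  comm : ∀ q (x : C.X (q + 1)), f q (C.d q x) = D.d q (f (q + 1) x)
  aug : ∀ x : C.X 0, D.ε (f 0 x) = C.ε x
  posMap : ∀ q x, x ∈ C.pos q → f q x ∈ D.pos q

theorem Hom.ext' {C D : ADC} {φ ψ : Hom C D} (h : φ.f = ψ.f) : φ = ψ := by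
  cases φ; cases ψ; cases h; rfl

/-- The identity morphism. -/
def Hom.id (C : ADC) : Hom C C where
  f _ := AddMonoidHom.id _
  comm _ _ := rfl
  aug _ := rfl
  posMap _ _ h := h

/-- (Diagrammatic) composition of morphisms. -/
def Hom.comp {C D E : ADC} (φ : Hom C D) (ψ : Hom D E) : Hom C E where
  f q := (ψ.f q).comp (φ.f q)
  comm q x := by simp [AddMonoidHom.comp_apply, φ.comm, ψ.comm]
  aug x := by simp [AddMonoidHom.comp_apply, φ.aug, ψ.aug]
  posMap q x h := ψ.posMap q _ (φ.posMap q x h)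

/-- The category `adCh` of augmented directed chain complexes. -/
instance : Category ADC where
  Hom := Hom
  id := Hom.id
  comp := Hom.comp
  id_comp _ := Hom.ext' (funext fun _ => AddMonoidHom.ext fun _ => rfl)
  comp_id _ := Hom.ext' (funext fun _ => AddMonoidHom.ext fun _ => rfl)
  assoc _ _ _ := Hom.ext' (funext fun _ => AddMonoidHom.ext fun _ => rfl)

/-! ### Suspension -/

/-- Chains of the suspension: `ℤ[⊥,⊤] = ℤ × ℤ` in degree `0` (with `⊥ = (1,0)` and
`⊤ = (0,1)`), and `C_{q-1}` in degree `q ≥ 1`. -/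
def suspX (C : ADC) : ℕ → Type
  | 0 => ℤ × ℤ
  | q + 1 => C.X q

instance suspInst (C : ADC) : ∀ q, AddCommGroup (C.suspX q)
  | 0 => inferInstanceAs (AddCommGroup (ℤ × ℤ))
  | q + 1 => C.inst q

/-- The differential of the suspension: `∂₀ c = ε(c)·(⊤ - ⊥)` and `∂_q = ∂_{q-1}` above. -/
def suspD (C : ADC) : ∀ q, C.suspX (q + 1) →+ C.suspX q
  | 0 => (-C.ε).prod C.ε
  | q + 1 => C.d q

/-- The positivity submonoid `ℕ[⊥,⊤]` in degree 0. -/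
def nnZZ : AddSubmonoid (ℤ × ℤ) where
  carrier := {p | 0 ≤ p.1 ∧ 0 ≤ p.2}
  zero_mem' := ⟨le_refl 0, le_refl 0⟩
  add_mem' := fun ha hb => ⟨add_nonneg ha.1 hb.1, add_nonneg ha.2 hb.2⟩

def suspPos (C : ADC) : ∀ q, AddSubmonoid (C.suspX q)
  | 0 => nnZZ
  | q + 1 => C.pos q

/-- The two-point suspension of an augmented directed chain complex. -/
def susp (C : ADC) : ADC where
  X := C.suspX
  inst := C.suspInst
  d := C.suspD
  dd := by
    intro q x
    match q with
    | 0 =>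
      show ((-C.ε).prod C.ε) (C.d 0 x) = (0, 0)
      have h := C.εd x
      simp [AddMonoidHom.prod_apply, h]
    | q + 1 => exact C.dd q x
  ε := (AddMonoidHom.fst ℤ ℤ) + (AddMonoidHom.snd ℤ ℤ)
  εd := by
    intro x
    show (AddMonoidHom.fst ℤ ℤ + AddMonoidHom.snd ℤ ℤ) (((-C.ε).prod C.ε) x) = 0
    simp
    exact neg_add_cancel (C.ε x)
  pos := C.suspPos

/-- The suspension of a morphism. -/
def Hom.susp {C D : ADC} (φ : Hom C D) : Hom C.susp D.susp where
  f := fun q => match q with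
    | 0 => AddMonoidHom.id (ℤ × ℤ)
    | q + 1 => φ.f q
  comm := by
    intro q x
    match q with
    | 0 =>
      show ((-C.ε).prod C.ε) x = ((-D.ε).prod D.ε) (φ.f 0 x)
      simp [AddMonoidHom.prod_apply, φ.aug]
      exact Prod.ext (by show -C.ε x = -D.ε (φ.f 0 x); rw [φ.aug x]) (φ.aug x).symm
    | q + 1 => exact φ.comm q x
  aug := fun x => rfl
  posMap := by
    intro q x hx
    match q with
    | 0 => exact hx
    | q + 1 => exact φ.posMap q x hx

end ADC

theorem AddMonoidHom.ext_int_prod {M : Type*} [AddCommMonoid M] {f g : ℤ × ℤ →+ M}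
    (h₁ : f (1, 0) = g (1, 0)) (h₂ : f (0, 1) = g (0, 1)) : f = g := by
  rw [← f.coprod_unique, ← g.coprod_unique]
  congr 1 <;> exact AddMonoidHom.ext_int ‹_›

namespace ADC

variable {C D : ADC}

theorem Hom.susp_injective : Function.Injective (Hom.susp : Hom C D → Hom C.susp D.susp) :=
  fun _ _ h => Hom.ext' (funext fun q => congrFun (congrArg Hom.f h) (q + 1))

def Hom.desusp (ψ : Hom C.susp D.susp) (hψ : ψ.f 0 = AddMonoidHom.id (ℤ × ℤ)) : Hom C D where
  f q := ψ.f (q + 1)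
  comm q := ψ.comm (q + 1)
  -- the `⊤`-coordinate of `ψ (∂ c) = ∂ (ψ c)`, as `∂ c = ε(c)·(⊤ - ⊥)` in degree `0`
  aug x := by
    have h := congrArg Prod.snd (ψ.comm 0 x)
    rw [hψ] at h
    exact h.symm
  posMap q := ψ.posMap (q + 1)

theorem Hom.susp_desusp (ψ : Hom C.susp D.susp) (hψ : ψ.f 0 = AddMonoidHom.id (ℤ × ℤ)) :
    (ψ.desusp hψ).susp = ψ :=
  Hom.ext' <| funext fun
    | 0 => hψ.symm
    | _ + 1 => rfl

end ADC

/-- The two-point suspension functor `Σ : adCh → adCh_{ΣO[-1]/}` is fully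
faithful: for all `C D`, the suspension gives a bijection between morphisms `C → D` and
morphisms `ΣC → ΣD` under `ΣO[-1]`, i.e. those preserving the two distinguished
`0`-chains `⊥ = (1,0)` and `⊤ = (0,1)`. -/
theorem susp_fully_faithful (C D : ADC) :
    Function.Bijective
      (fun φ : ADC.Hom C D =>
        (⟨ADC.Hom.susp φ, rfl, rfl⟩ :
          {ψ : ADC.Hom C.susp D.susp //
            ψ.f 0 ((1 : ℤ), (0 : ℤ)) = ((1 : ℤ), (0 : ℤ)) ∧
            ψ.f 0 ((0 : ℤ), (1 : ℤ)) = ((0 : ℤ), (1 : ℤ))})) := by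
  refine ⟨fun _ _ h => ADC.Hom.susp_injective (congrArg Subtype.val h), ?_⟩
  rintro ⟨ψ, h₁, h₂⟩
  have hψ : ψ.f 0 = AddMonoidHom.id (ℤ × ℤ) := AddMonoidHom.ext_int_prod h₁ h₂
  exact ⟨ψ.desusp hψ, Subtype.ext (ψ.susp_desusp hψ)⟩
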